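/- Let d1, d2 ∈ SFL be such that ρ_PSD(d1) = ρ_PSD(d2). Then for every V ⊆ VI, ρ_PSD(aproj_S(d1, V)) = ρ_PSD(aproj_S(d2, V)); i.e., ρ_PSD is a congruence with respect to the abstract existential quantification operator aproj_S. -/

import Mathlib

open Classical

noncomputable section

/-- The set `SG` of sharing groups over `VI`: nonempty subsets of `VI`. -/
def SG {Vr : Type} (VI : Set Vr) : Set (Set Vr) := {S | S ⊆ VI ∧ S ≠ ∅}

/-- An element of the abstract domain `SFL`: a set-sharing component together
with a freeness and a linearity component. -/
structure SFLElem (Vr : Type) where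
  sh : Set (Set Vr)
  f : Set Vr
  l : Set Vr

/-- Well-formedness of an `SFL` element: `sh ∈ SH = ℘(SG VI)`, `f ⊆ VI`, `l ⊆ VI`. -/
def SFLElem.WF {Vr : Type} (VI : Set Vr) (d : SFLElem Vr) : Prop :=
  d.sh ⊆ SG VI ∧ d.f ⊆ VI ∧ d.l ⊆ VI

/-- The bottom element `⊥_S = ⟨∅, VI, VI⟩` of `SFL`. -/
def botS {Vr : Type} (VI : Set Vr) : SFLElem Vr := ⟨∅, VI, VI⟩

/-- The order of `SFL`: `⊆` on the sharing component, `⊇` on freeness and linearity. -/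
def SFLElem.leS {Vr : Type} (d1 d2 : SFLElem Vr) : Prop :=
  d1.sh ⊆ d2.sh ∧ d2.f ⊆ d1.f ∧ d2.l ⊆ d1.l

/-- The least upper bound of `SFL`. -/
def SFLElem.lubS {Vr : Type} (d1 d2 : SFLElem Vr) : SFLElem Vr :=
  ⟨d1.sh ∪ d2.sh, d1.f ∩ d2.f, d1.l ∩ d2.l⟩

section SHOps

variable {Vr : Type}

/-- The relevant component of `sh` with respect to `V`. -/
def relSH (V : Set Vr) (sh : Set (Set Vr)) : Set (Set Vr) :=
  {S | S ∈ sh ∧ S ∩ V ≠ ∅}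

/-- The irrelevant component of `sh` with respect to `V`. -/
def nrelSH (V : Set Vr) (sh : Set (Set Vr)) : Set (Set Vr) := sh \ relSH V sh

/-- The binary union function on sharing sets. -/
def binSH (sh1 sh2 : Set (Set Vr)) : Set (Set Vr) :=
  {S | ∃ S1 ∈ sh1, ∃ S2 ∈ sh2, S = S1 ∪ S2}

/-- The star-union of a sharing set: all sharing groups that are unions of
finitely many (at least one) elements of `sh`. -/
def starSH (VI : Set Vr) (sh : Set (Set Vr)) : Set (Set Vr) :=
  {S | S ∈ SG VI ∧ ∃ F : Set (Set Vr), F.Finite ∧ F.Nonempty ∧ F ⊆ sh ∧ S = ⋃₀ F}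

/-- The redundancy-removing upper closure operator `ρ_PSD` on sharing sets. -/
def rhoPSDsh (VI : Set Vr) (sh : Set (Set Vr)) : Set (Set Vr) :=
  {S | S ∈ SG VI ∧ ∀ y ∈ S, S = ⋃₀ {U | U ∈ sh ∧ y ∈ U ∧ U ⊆ S}}

/-- `ρ_PSD` on `SFL`: it acts on the sharing component only. -/
def rhoPSD (VI : Set Vr) (d : SFLElem Vr) : SFLElem Vr :=
  ⟨rhoPSDsh VI d.sh, d.f, d.l⟩

end SHOps

/-- The abstract existential quantification on sharing sets. -/
def aexistsSH {Vr : Type} (sh : Set (Set Vr)) (V : Set Vr) : Set (Set Vr) :=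
  {S | ∃ U ∈ sh, S = U \ V ∧ S ≠ ∅} ∪ {S | ∃ x ∈ V, S = ({x} : Set Vr)}

/-- The abstract existential quantification operator `aproj_S` on `SFL`. -/
def aprojS {Vr : Type} (d : SFLElem Vr) (V : Set Vr) : SFLElem Vr :=
  ⟨aexistsSH d.sh V, d.f ∪ V, d.l ∪ V⟩

/-! A sharing group `S` lies in `ρ_PSD(sh)` exactly when any two points of `S` lie together in
some group of `sh` contained in `S`. This pair-covering relation between sharing sets is
transitive and survives `aexists`: a witness `U` for two points outside `V` yields the witness
`U \ V`. For well-formed `sh₁`, `sh₁ ⊆ ρ_PSD(sh₁) = ρ_PSD(sh₂)`, so `sh₁` is pair-covered by `sh₂`;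
hence so are their projections, and symmetrically. -/

section PairCovers

variable {Vr : Type}

def PairCovers (sh' sh : Set (Set Vr)) : Prop :=
  ∀ W ∈ sh, ∀ y ∈ W, ∀ x ∈ W, ∃ U ∈ sh', y ∈ U ∧ x ∈ U ∧ U ⊆ W

theorem PairCovers.of_subset {sh sh' : Set (Set Vr)} (h : sh ⊆ sh') : PairCovers sh' sh :=
  fun W hW _ hy _ hx => ⟨W, h hW, hy, hx, subset_rfl⟩

theorem PairCovers.trans {sh₁ sh₂ sh₃ : Set (Set Vr)} (h₁₂ : PairCovers sh₁ sh₂)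
    (h₂₃ : PairCovers sh₂ sh₃) : PairCovers sh₁ sh₃ := by
  intro W hW y hy x hx
  obtain ⟨U, hU, hyU, hxU, hUW⟩ := h₂₃ W hW y hy x hx
  obtain ⟨U', hU', hyU', hxU', hU'U⟩ := h₁₂ U hU y hyU x hxU
  exact ⟨U', hU', hyU', hxU', hU'U.trans hUW⟩

theorem PairCovers.aexistsSH {sh sh' : Set (Set Vr)} (h : PairCovers sh' sh) (V : Set Vr) :
    PairCovers (aexistsSH sh' V) (aexistsSH sh V) := by
  rintro W (⟨U, hU, rfl, -⟩ | hsingle) y hy x hx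
  · obtain ⟨U', hU', hyU', hxU', hU'U⟩ := h U hU y hy.1 x hx.1
    exact ⟨U' \ V, Or.inl ⟨U', hU', rfl, Set.nonempty_iff_ne_empty.mp ⟨y, hyU', hy.2⟩⟩,
      ⟨hyU', hy.2⟩, ⟨hxU', hx.2⟩, Set.sdiff_subset_sdiff_left hU'U⟩
  · exact ⟨W, Or.inr hsingle, hy, hx, subset_rfl⟩

theorem mem_rhoPSDsh_iff {VI : Set Vr} {sh : Set (Set Vr)} {S : Set Vr} :
    S ∈ rhoPSDsh VI sh ↔ S ∈ SG VI ∧ PairCovers sh {S} := by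
  simp only [rhoPSDsh, PairCovers, Set.mem_singleton_iff, forall_eq]
  refine and_congr_right fun _ => forall₂_congr fun y _ => ?_
  have hsub : ⋃₀ {U | U ∈ sh ∧ y ∈ U ∧ U ⊆ S} ⊆ S := Set.sUnion_subset fun U hU => hU.2.2
  rw [eq_comm, ← hsub.ge_iff_eq]
  simp only [Set.subset_def, Set.mem_sUnion]
  grind

theorem pairCovers_rhoPSDsh (VI : Set Vr) (sh : Set (Set Vr)) : PairCovers sh (rhoPSDsh VI sh) :=
  fun W hW => (mem_rhoPSDsh_iff.mp hW).2 W rfl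

theorem subset_rhoPSDsh {VI : Set Vr} {sh : Set (Set Vr)} (h : sh ⊆ SG VI) :
    sh ⊆ rhoPSDsh VI sh :=
  fun _ hS => mem_rhoPSDsh_iff.mpr ⟨h hS, .of_subset (Set.singleton_subset_iff.mpr hS)⟩

theorem rhoPSDsh_subset_of_pairCovers {VI : Set Vr} {sh sh' : Set (Set Vr)}
    (h : PairCovers sh' sh) : rhoPSDsh VI sh ⊆ rhoPSDsh VI sh' := fun _ hS =>
  have ⟨hSG, hcov⟩ := mem_rhoPSDsh_iff.mp hS
  mem_rhoPSDsh_iff.mpr ⟨hSG, h.trans hcov⟩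

theorem rhoPSDsh_aexistsSH_subset {VI : Set Vr} {sh sh' : Set (Set Vr)} (h : sh ⊆ SG VI)
    (hρ : rhoPSDsh VI sh ⊆ rhoPSDsh VI sh') (V : Set Vr) :
    rhoPSDsh VI (aexistsSH sh V) ⊆ rhoPSDsh VI (aexistsSH sh' V) :=
  have hcov : PairCovers sh' sh :=
    (pairCovers_rhoPSDsh VI sh').trans (.of_subset ((subset_rhoPSDsh h).trans hρ))
  rhoPSDsh_subset_of_pairCovers (hcov.aexistsSH V)

end PairCovers

theorem rhoPSD_congruence_aproj_general
    {Vr : Type} (VI : Set Vr)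
    (d1 d2 : SFLElem Vr) (_h1 : d1.WF VI) (_h2 : d2.WF VI)
    (_hpsd : rhoPSD VI d1 = rhoPSD VI d2)
    (V : Set Vr) :
    rhoPSD VI (aprojS d1 V) = rhoPSD VI (aprojS d2 V) := by
  obtain ⟨hsh, hf, hl⟩ := SFLElem.mk.inj _hpsd
  simp only [rhoPSD, aprojS, hf, hl, SFLElem.mk.injEq, and_true]
  exact (rhoPSDsh_aexistsSH_subset _h1.1 hsh.le V).antisymm
    (rhoPSDsh_aexistsSH_subset _h2.1 hsh.ge V)

/-- `ρ_PSD` is a congruence with respect to the abstract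
existential quantification operator `aproj_S`. -/
theorem rhoPSD_congruence_aproj
    {Vr : Type} (VI : Set Vr) (_hVI : VI.Finite)
    (d1 d2 : SFLElem Vr) (_h1 : d1.WF VI) (_h2 : d2.WF VI)
    (_hpsd : rhoPSD VI d1 = rhoPSD VI d2)
    (V : Set Vr) (_hV : V ⊆ VI) :
    rhoPSD VI (aprojS d1 V) = rhoPSD VI (aprojS d2 V) :=
  rhoPSD_congruence_aproj_general VI d1 d2 _h1 _h2 _hpsd V
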